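/- Let C be a precategory (category). For (f, g) ∈ U_C(X) (so f : X ⟶ Y, g : Z ⟶ Y), (f', g) ∈ Ũ_C(X') (so f' : X' ⟶ Z) and u : X' ⟶ X such that u ≫ f = f' ≫ g, the commutative square in the category of presheaves of sets on C with top arrow ṽ(f', g) : Yo(X') ⟶ Ũ_C, left arrow Yo(u), right arrow p_C : Ũ_C ⟶ U_C and bottom arrow v(f, g) : Yo(X) ⟶ U_C is a pullback square if and only if the square in C with top arrow f' : X' ⟶ Z, left arrow u : X' ⟶ X, right arrow g : Z ⟶ Y and bottom arrow f : X ⟶ Y is a pullback square. -/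

import Mathlib

open CategoryTheory Limits Opposite

universe u

variable (C : Type u) [SmallCategory C]

/-- The presheaf `U_C` with `U_C(X) = {(f, g) : f : X ⟶ Y, g : Z ⟶ Y}`,
encoded as `⟨Y, Z, f, g⟩`, with restriction `(f, g) ↦ (a ≫ f, g)`. -/
def UPsh : Cᵒᵖ ⥤ Type u where
  obj X := Σ (Y : C) (Z : C), (unop X ⟶ Y) × (Z ⟶ Y)
  map a := TypeCat.ofHom fun s => ⟨s.1, s.2.1, a.unop ≫ s.2.2.1, s.2.2.2⟩
  map_id := by intro X; refine ConcreteCategory.hom_ext _ _ fun s => ?_; simp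
  map_comp := by intro X Y Z a b; refine ConcreteCategory.hom_ext _ _ fun s => ?_; simp

/-- The presheaf `Ũ_C` with `Ũ_C(X) = {(f', g) : f' : X ⟶ Z, g : Z ⟶ Y}`,
encoded as `⟨Z, Y, f', g⟩`, with restriction `(f', g) ↦ (a ≫ f', g)`. -/
def UtildePsh : Cᵒᵖ ⥤ Type u where
  obj X := Σ (Z : C) (Y : C), (unop X ⟶ Z) × (Z ⟶ Y)
  map a := TypeCat.ofHom fun s => ⟨s.1, s.2.1, a.unop ≫ s.2.2.1, s.2.2.2⟩
  map_id := by intro X; refine ConcreteCategory.hom_ext _ _ fun s => ?_; simp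
  map_comp := by intro X Y Z a b; refine ConcreteCategory.hom_ext _ _ fun s => ?_; simp

/-- The morphism of presheaves `p_C : Ũ_C ⟶ U_C`, `(f', g) ↦ (f' ≫ g, g)`. -/
def pPsh : UtildePsh C ⟶ UPsh C where
  app X := TypeCat.ofHom fun s => ⟨s.2.1, s.1, s.2.2.1 ≫ s.2.2.2, s.2.2.2⟩
  naturality := by
    intro X Y a; refine ConcreteCategory.hom_ext _ _ fun s => ?_
    show (⟨s.2.1, s.1, (a.unop ≫ s.2.2.1) ≫ s.2.2.2, s.2.2.2⟩ : (UPsh C).obj Y) =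
      ⟨s.2.1, s.1, a.unop ≫ s.2.2.1 ≫ s.2.2.2, s.2.2.2⟩
    rw [Category.assoc]

/-!
Both classifying maps factor through Yoneda images of `f'` and `f`, followed by the maps
classifying the generic elements `(𝟙 Z, g) ∈ Ũ_C(Z)` and `(𝟙 Y, g) ∈ U_C(Y)`. The square formed by
these generic maps over `Yo(g)` and `p_C` is a pullback: a section of `Ũ_C` over `W` lying over
`(k, g)` is exactly a factorisation `k = q ≫ g`. Pasting thus reduces the claim to the Yoneda image
of the square in `C`, and the Yoneda embedding preserves and reflects pullbacks.
-/

variable {C}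

lemma UtildePsh.yonedaEquiv_symm_mk {X' Y Z : C} (f' : X' ⟶ Z) (g : Z ⟶ Y) :
    yonedaEquiv.symm (⟨Z, Y, f', g⟩ : (UtildePsh C).obj (op X')) =
      yoneda.map f' ≫ (yonedaEquiv (F := UtildePsh C)).symm ⟨Z, Y, 𝟙 Z, g⟩ := by
  refine .symm ((yonedaEquiv_symm_naturality_left f' _ _).trans (congrArg _ ?_))
  show (⟨Z, Y, f' ≫ 𝟙 Z, g⟩ : (UtildePsh C).obj (op X')) = ⟨Z, Y, f', g⟩
  rw [Category.comp_id]

lemma UPsh.yonedaEquiv_symm_mk {X Y Z : C} (f : X ⟶ Y) (g : Z ⟶ Y) :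
    yonedaEquiv.symm (⟨Y, Z, f, g⟩ : (UPsh C).obj (op X)) =
      yoneda.map f ≫ (yonedaEquiv (F := UPsh C)).symm ⟨Y, Z, 𝟙 Y, g⟩ := by
  refine .symm ((yonedaEquiv_symm_naturality_left f _ _).trans (congrArg _ ?_))
  show (⟨Y, Z, f ≫ 𝟙 Y, g⟩ : (UPsh C).obj (op X)) = ⟨Y, Z, f, g⟩
  rw [Category.comp_id]

lemma isPullback_yonedaEquiv_symm_id {Y Z : C} (g : Z ⟶ Y) :
    IsPullback (yonedaEquiv.symm (⟨Z, Y, 𝟙 Z, g⟩ : (UtildePsh C).obj (op Z)))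
      (yoneda.map g) (pPsh C) (yonedaEquiv.symm (⟨Y, Z, 𝟙 Y, g⟩ : (UPsh C).obj (op Y))) := by
  refine IsPullback.of_forall_isPullback_app fun W => (Types.isPullback_iff _ _ _ _).2 ⟨?_, ?_, ?_⟩
  · ext (q : unop W ⟶ Z)
    change (⟨Y, Z, (q ≫ 𝟙 Z) ≫ g, g⟩ : (UPsh C).obj W) = ⟨Y, Z, (q ≫ g) ≫ 𝟙 Y, g⟩
    simp only [Category.comp_id]
  · rintro (q₁ : unop W ⟶ Z) (q₂ : unop W ⟶ Z) ⟨h, -⟩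
    change (⟨Z, Y, q₁ ≫ 𝟙 Z, g⟩ : Σ Z' Y' : C, (unop W ⟶ Z') × (Z' ⟶ Y')) =
      ⟨Z, Y, q₂ ≫ 𝟙 Z, g⟩ at h
    simpa using h
  · rintro ⟨Z', Y', q, g'⟩ (k : unop W ⟶ Y) hk
    change (⟨Y', Z', q ≫ g', g'⟩ : Σ Y' Z' : C, (unop W ⟶ Y') × (Z' ⟶ Y')) =
      ⟨Y, Z, k ≫ 𝟙 Y, g⟩ at hk
    obtain ⟨rfl, hk⟩ := Sigma.mk.inj hk
    obtain ⟨rfl, hk⟩ := Sigma.mk.inj (eq_of_heq hk)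
    obtain ⟨hqk, rfl⟩ := Prod.mk.inj (eq_of_heq hk)
    refine ⟨q, ?_, ?_⟩
    · change (⟨Z', Y', q ≫ 𝟙 Z', g'⟩ : (UtildePsh C).obj W) = ⟨Z', Y', q, g'⟩
      rw [Category.comp_id]
    · simpa using hqk

/-- Lemma 2015.07.25.l1 (pullback part): for `(f, g) ∈ U_C(X)`, `(f', g) ∈ Ũ_C(X')`
and `u : X' ⟶ X` with `u ≫ f = f' ≫ g`, the commutative square in presheaves with
top `ṽ(f', g)`, left `Yo(u)`, right `p_C` and bottom `v(f, g)` is a pullback square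
iff the square in `C` with top `f'`, left `u`, right `g`, bottom `f` is a pullback
square. -/
theorem uPsh_square_isPullback_iff {C : Type u} [SmallCategory C]
    {X X' Y Z : C} (f : X ⟶ Y) (g : Z ⟶ Y) (f' : X' ⟶ Z) (u : X' ⟶ X)
    (w : u ≫ f = f' ≫ g) :
    IsPullback (yonedaEquiv.symm (⟨Z, Y, f', g⟩ : (UtildePsh C).obj (op X')))
        (yoneda.map u) (pPsh C)
        (yonedaEquiv.symm (⟨Y, Z, f, g⟩ : (UPsh C).obj (op X))) ↔
      IsPullback f' u g f := by
  rw [UtildePsh.yonedaEquiv_symm_mk, UPsh.yonedaEquiv_symm_mk,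
    (isPullback_yonedaEquiv_symm_id g).paste_horiz_iff (by simp only [← Functor.map_comp, w])]
  exact IsPullback.map_iff yoneda w.symm
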